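/- arXiv:1403.5016 — 4 statements merged into one kernel-verified Lean document; each statement's English description precedes it below -/
import Mathlib

section
/- Suppose ρ̄ ∈ C¹ on the closure of a bounded domain Ω ⊂ ℝ³ with inf ρ̄ > 0 and ρ̄'(x₃⁰) > 0 at some point of Ω (ρ̄ depending only on x₃). Then there exist positive constants c₁, c₂ (depending on g, ρ̄, μ, Ω) such that α(s) ≥ c₁ − s c₂ for all s > 0, where α(s) = sup_{v ∈ 𝒜} E(v, s). In particular α(s) > 0 for all sufficiently small s > 0. -/
/-!
Near a point of `Ω` where `ρ̄' > 0`, take a smooth bump `ψ` supported in `Ω ∩ {ρ̄' > 0}` and the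
field `v = (∂₃ψ, 0, -∂₁ψ) = curl (0, -ψ, 0)`. It is divergence-free, and `∂₁ψ` cannot vanish
identically because `ψ` is not constant along the `x₁`-axis. Hence, after normalizing
`∫ ρ̄ |v|² = 1`, only the buoyancy term of `E₁` survives and `E₁(v) = g ∫ ρ̄' v₃² > 0`. Then
`α(s) ≥ E(v, s) = E₁(v) - s E₂(v)`, so `c₁ = E₁(v)` and `c₂ = max (E₂(v)) 1` will do.
-/

open MeasureTheory Real
noncomputable section

abbrev E3 : Type := EuclideanSpace ℝ (Fin 3)

/-- Partial derivative in direction `i`. -/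
def pd (i : Fin 3) (f : E3 → ℝ) (x : E3) : ℝ :=
  fderiv ℝ f x (EuclideanSpace.single i 1)

/-- Divergence of a vector field. -/
def div3 (v : E3 → Fin 3 → ℝ) (x : E3) : ℝ :=
  ∑ i : Fin 3, pd i (fun y => v y i) x

/-- Squared Frobenius norm of the gradient `|∇v|²`. -/
def gradSq (v : E3 → Fin 3 → ℝ) (x : E3) : ℝ :=
  ∑ i : Fin 3, ∑ j : Fin 3, (pd j (fun y => v y i) x) ^ 2

/-- The functional `E₁(v)`. -/
def E1 (g a : ℝ) (ρ' ρ p : E3 → ℝ) (Ω : Set E3) (v : E3 → Fin 3 → ℝ) : ℝ :=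
  ∫ x in Ω, (g * ρ' x * (v x 2) ^ 2 +
    (2 * g * ρ x * (v x 2) - (1 + a) * p x * div3 v x) * div3 v x)

/-- The dissipation functional `E₂(v)`. -/
def E2 (μ μ₀ : ℝ) (Ω : Set E3) (v : E3 → Fin 3 → ℝ) : ℝ :=
  ∫ x in Ω, (μ * gradSq v x + μ₀ * (div3 v x) ^ 2)

/-- The full energy `E(v,s) = E₁(v) − s E₂(v)`. -/
def Efun (g a μ μ₀ : ℝ) (ρ' ρ p : E3 → ℝ) (Ω : Set E3) (s : ℝ)
    (v : E3 → Fin 3 → ℝ) : ℝ :=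
  E1 g a ρ' ρ p Ω v - s * E2 μ μ₀ Ω v

/-- The admissible set `𝒜 = { v ∈ H₀¹ : ∫ ρ̄|v|² = 1 }`, where membership in
`H₀¹(Ω;ℝ³)` is described by the predicate `H01`. -/
def Adm (H01 : (E3 → Fin 3 → ℝ) → Prop) (ρ : E3 → ℝ) (Ω : Set E3) :
    Set (E3 → Fin 3 → ℝ) :=
  { v | H01 v ∧ ∫ x in Ω, ρ x * (∑ i : Fin 3, (v x i) ^ 2) = 1 }

/-- `α(s) = sup_{v ∈ 𝒜} E(v,s)`. -/
def alpha (H01 : (E3 → Fin 3 → ℝ) → Prop) (g a μ μ₀ : ℝ) (ρ' ρ p : E3 → ℝ)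
    (Ω : Set E3) (s : ℝ) : ℝ :=
  sSup ((fun v => Efun g a μ μ₀ ρ' ρ p Ω s v) '' Adm H01 ρ Ω)

open Function Metric

section PartialDerivatives

variable {ψ : E3 → ℝ}

lemma pd_pd_comm (hψ : ContDiff ℝ 2 ψ) (i j : Fin 3) (x : E3) :
    pd i (pd j ψ) x = pd j (pd i ψ) x := by
  have hd : DifferentiableAt ℝ (fderiv ℝ ψ) x :=
    (hψ.fderiv_right (m := 1) le_rfl).differentiable one_ne_zero x
  have hsecond : ∀ i j, pd i (pd j ψ) x =
      fderiv ℝ (fderiv ℝ ψ) x (EuclideanSpace.single i 1) (EuclideanSpace.single j 1) := by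
    intro i j
    change fderiv ℝ (fun y => fderiv ℝ ψ y _) x _ = _
    rw [fderiv_clm_apply hd (differentiableAt_const _)]
    simp
  rw [hsecond, hsecond, (hψ.contDiffAt (x := x)).isSymmSndFDerivAt (by simp)]

lemma contDiff_pd {n : WithTop ℕ∞} (hψ : ContDiff ℝ (n + 1) ψ) (i : Fin 3) :
    ContDiff ℝ n (pd i ψ) :=
  (hψ.fderiv_right le_rfl).clm_apply contDiff_const

lemma tsupport_pd_subset (i : Fin 3) : tsupport (pd i ψ) ⊆ tsupport ψ :=
  tsupport_fderiv_apply_subset ℝ _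

lemma exists_pd_ne_zero_of_ne (hψ : Differentiable ℝ ψ) {i : Fin 3} {x : E3} {t : ℝ}
    (hne : ψ (x + t • EuclideanSpace.single i 1) ≠ ψ x) : ∃ y, pd i ψ y ≠ 0 := by
  by_contra! hzero
  have hderiv : ∀ s : ℝ,
      HasDerivAt (fun s : ℝ => ψ (x + s • EuclideanSpace.single i 1)) 0 s := by
    intro s
    have := (hψ _).hasFDerivAt.comp_hasDerivAt s
      (((hasDerivAt_id s).smul_const (EuclideanSpace.single i (1 : ℝ))).const_add x)
    rwa [one_smul, ← pd, hzero] at this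
  exact hne (is_const_of_deriv_eq_zero (fun s => (hderiv s).differentiableAt)
    (fun s => (hderiv s).deriv) t 0 |>.trans (by simp))

end PartialDerivatives

section StreamField

variable {ψ : E3 → ℝ}

def streamField (ψ : E3 → ℝ) : E3 → Fin 3 → ℝ := fun x => ![pd 2 ψ x, 0, -pd 0 ψ x]

lemma div3_streamField (hψ : ContDiff ℝ 2 ψ) (x : E3) : div3 (streamField ψ) x = 0 := by
  have hneg : pd 2 (fun y => -pd 0 ψ y) x = -pd 2 (pd 0 ψ) x := by
    rw [pd, fderiv_fun_neg]
    rfl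
  have hconst : pd 1 (fun _ => 0) x = 0 := by simp [pd]
  simp only [div3, Fin.sum_univ_three, streamField, Matrix.cons_val_zero, Matrix.cons_val_one,
    Matrix.cons_val_two, Matrix.head_cons, Matrix.tail_cons]
  rw [hneg, hconst, pd_pd_comm hψ 0 2]
  ring

lemma contDiff_streamField_apply (hψ : ContDiff ℝ 2 ψ) (i : Fin 3) :
    ContDiff ℝ 1 fun x => streamField ψ x i := by
  fin_cases i
  · exact contDiff_pd hψ 2
  · exact contDiff_const
  · exact (contDiff_pd hψ 0).neg

lemma tsupport_streamField_subset : tsupport (streamField ψ) ⊆ tsupport ψ := by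
  refine closure_minimal (fun x hx => ?_) (isClosed_tsupport ψ)
  by_contra hxψ
  have hpd : ∀ i, pd i ψ x = 0 := fun i =>
    image_eq_zero_of_notMem_tsupport fun h => hxψ (tsupport_pd_subset i h)
  exact hx (by ext i; fin_cases i <;> simp [streamField, hpd])

theorem exists_divFree_field {U : Set E3} (hU : IsOpen U) {x₀ : E3} (hx₀ : x₀ ∈ U) :
    ∃ v : E3 → Fin 3 → ℝ, (∀ i, ContDiff ℝ 1 fun x => v x i) ∧ HasCompactSupport v ∧
      tsupport v ⊆ U ∧ (∀ x, div3 v x = 0) ∧ ∃ y, v y 2 ≠ 0 := by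
  obtain ⟨r, hr, hrU⟩ := isOpen_iff.1 hU x₀ hx₀
  let b : ContDiffBump x₀ := ⟨r / 4, r / 2, by positivity, by linarith⟩
  have hbU : tsupport b ⊆ U := by
    rw [b.tsupport_eq]
    exact (closedBall_subset_ball (by simp [b]; linarith)).trans hrU
  have hb : ContDiff ℝ 2 b := b.contDiff
  have hbne : b (x₀ + b.rOut • EuclideanSpace.single 0 1) ≠ b x₀ := by
    rw [b.one_of_mem_closedBall (mem_closedBall_self b.rIn_pos.le), b.zero_of_le_dist (by
      simp [dist_eq_norm, norm_smul, abs_of_pos b.rOut_pos])]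
    exact zero_ne_one
  obtain ⟨y, hy⟩ := exists_pd_ne_zero_of_ne (hb.differentiable two_ne_zero) hbne
  exact ⟨streamField b, contDiff_streamField_apply hb, b.hasCompactSupport.mono'
    (subset_closure.trans tsupport_streamField_subset), tsupport_streamField_subset.trans hbU,
    div3_streamField hb, y, by simpa [streamField] using hy⟩

end StreamField

lemma setIntegral_mul_pos {X : Type*} [TopologicalSpace X] [MeasurableSpace X]
    [OpensMeasurableSpace X] {μ : Measure X} [μ.IsOpenPosMeasure] [IsFiniteMeasureOnCompacts μ]
    {s : Set X} {w f : X → ℝ} (hw : Continuous w) (hf : Continuous f) (hfc : HasCompactSupport f)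
    (hfs : support f ⊆ s) (hf0 : 0 ≤ f) (hwf : ∀ x ∈ support f, 0 < w x) {x₁ : X}
    (hx₁ : f x₁ ≠ 0) : 0 < ∫ x in s, w x * f x ∂μ := by
  have hwf0 : ∀ x, x ∉ support f → w x * f x = 0 := fun x hx => by
    rw [notMem_support.1 hx, mul_zero]
  rw [setIntegral_eq_integral_of_forall_compl_eq_zero fun x hx => hwf0 x fun h => hx (hfs h)]
  refine (hw.mul hf).integral_pos_of_hasCompactSupport_nonneg_nonzero hfc.mul_left
    (fun x => ?_) (mul_ne_zero (hwf x₁ hx₁).ne' hx₁)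
  by_cases hx : x ∈ support f
  · exact mul_nonneg (hwf x hx).le (hf0 x)
  · exact (hwf0 x hx).ge

section Energy

variable {v : E3 → Fin 3 → ℝ}

lemma div3_const_smul (hv : ∀ i, Differentiable ℝ fun x => v x i) (c : ℝ) (x : E3) :
    div3 (fun y => c • v y) x = c * div3 v x := by
  simp only [div3, Finset.mul_sum, Pi.smul_apply, smul_eq_mul, pd]
  refine Finset.sum_congr rfl fun i _ => ?_
  rw [fderiv_const_mul (hv i x)]
  rfl

lemma E1_eq_of_div3_eq_zero (g a : ℝ) (ρ' ρ p : E3 → ℝ) (Ω : Set E3) (hv : ∀ x, div3 v x = 0) :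
    E1 g a ρ' ρ p Ω v = g * ∫ x in Ω, ρ' x * v x 2 ^ 2 := by
  simp only [E1, hv, mul_zero, add_zero, ← integral_const_mul, mul_assoc]

end Energy

theorem exists_mem_Adm_E1_pos {Ω : Set E3} (hΩ : IsOpen Ω) {g : ℝ} (hg : 0 < g) (a : ℝ)
    {ρ' ρ : E3 → ℝ} (p : E3 → ℝ) (hρ'c : Continuous ρ') (hρc : Continuous ρ)
    (hρ : ∀ x ∈ Ω, 0 < ρ x) {x₀ : E3} (hx₀ : x₀ ∈ Ω) (hρ'x₀ : 0 < ρ' x₀)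
    {H01 : (E3 → Fin 3 → ℝ) → Prop}
    (hH01 : ∀ w : E3 → Fin 3 → ℝ, (∀ i : Fin 3, ContDiff ℝ 1 fun y => w y i) →
      closure {x | w x ≠ 0} ⊆ Ω → H01 w) :
    ∃ w ∈ Adm H01 ρ Ω, 0 < E1 g a ρ' ρ p Ω w := by
  obtain ⟨v, hvC1, hvc, hvU, hvdiv, y, hy⟩ :=
    exists_divFree_field (hΩ.inter (isOpen_lt continuous_const hρ'c)) ⟨hx₀, hρ'x₀⟩
  have hvcont (i : Fin 3) : Continuous fun x => v x i := (hvC1 i).continuous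
  have hsupp (x : E3) (hx : x ∈ support v) : x ∈ Ω ∧ 0 < ρ' x := hvU (subset_tsupport v hx)
  have hsum : support (fun x => ∑ i, v x i ^ 2) ⊆ support v :=
    support_subset_iff'.2 fun x hx => by simp [notMem_support.1 hx]
  have hcomp : support (fun x => v x 2 ^ 2) ⊆ support v :=
    support_subset_iff'.2 fun x hx => by simp [notMem_support.1 hx]
  have hI : 0 < ∫ x in Ω, ρ x * ∑ i, v x i ^ 2 :=
    setIntegral_mul_pos (x₁ := y) hρc (continuous_finsetSum _ fun i _ => (hvcont i).pow 2)
      (hvc.mono hsum) (fun x hx => (hsupp x (hsum hx)).1) (fun x => by positivity)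
      (fun x hx => hρ x (hsupp x (hsum hx)).1)
      ((sq_pos_of_ne_zero hy).trans_le (Finset.single_le_sum (f := fun i => v y i ^ 2)
        (fun i _ => sq_nonneg _) (Finset.mem_univ 2))).ne'
  have hJ : 0 < ∫ x in Ω, ρ' x * v x 2 ^ 2 :=
    setIntegral_mul_pos (x₁ := y) hρ'c ((hvcont 2).pow 2) (hvc.mono hcomp)
      (fun x hx => (hsupp x (hcomp hx)).1) (fun x => by positivity)
      (fun x hx => (hsupp x (hcomp hx)).2) (pow_ne_zero 2 hy)
  set c := (√(∫ x in Ω, ρ x * ∑ i, v x i ^ 2))⁻¹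
  have hdiv (x : E3) : div3 (fun z => c • v z) x = 0 := by
    rw [div3_const_smul (fun i => (hvC1 i).differentiable one_ne_zero), hvdiv, mul_zero]
  refine ⟨fun x => c • v x, ⟨hH01 _ (fun i => contDiff_const.mul (hvC1 i))
    ((tsupport_smul_subset_right _ _).trans (hvU.trans Set.inter_subset_left)), ?_⟩, ?_⟩
  · simp only [Pi.smul_apply, smul_eq_mul, mul_pow, ← Finset.mul_sum, mul_left_comm (ρ _),
      integral_const_mul, c, inv_pow, sq_sqrt hI.le, inv_mul_cancel₀ hI.ne']
  · simp only [E1_eq_of_div3_eq_zero g a ρ' ρ p Ω hdiv, Pi.smul_apply, smul_eq_mul, mul_pow,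
      mul_left_comm (ρ' _), integral_const_mul]
    positivity

theorem alpha_lower_bound_general
    (Ω : Set E3) (hΩo : IsOpen Ω)
    (g a μ μ₀ : ℝ) (hg : 0 < g)
    -- the density profile `ρ̄(x) = R(x₃)` depends only on the height `x₃`
    (R : ℝ → ℝ) (hR : ContDiff ℝ 1 R)
    (hRpos : ∀ x ∈ closure Ω, 0 < R (x 2))
    (x₀ : E3) (hx₀ : x₀ ∈ Ω) (hR' : 0 < deriv R (x₀ 2))
    (p : E3 → ℝ)
    (H01 : (E3 → Fin 3 → ℝ) → Prop)  -- membership in `H₀¹(Ω;ℝ³)`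
    -- `H₀¹` contains all `C¹` fields compactly supported inside `Ω`
    (hH01 : ∀ w : E3 → Fin 3 → ℝ, (∀ i : Fin 3, ContDiff ℝ 1 fun y => w y i) →
      closure {x | w x ≠ 0} ⊆ Ω → H01 w)
    (hbdd : ∀ s > (0:ℝ), BddAbove
      ((fun v => Efun g a μ μ₀ (fun x => deriv R (x 2)) (fun x => R (x 2)) p Ω s v) ''
        Adm H01 (fun x => R (x 2)) Ω)) :
    ∃ c₁ c₂ : ℝ, 0 < c₁ ∧ 0 < c₂ ∧
      ∀ s > (0:ℝ), c₁ - s * c₂ ≤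
        alpha H01 g a μ μ₀ (fun x => deriv R (x 2)) (fun x => R (x 2)) p Ω s := by
  have hR'c : Continuous (deriv R) := hR.continuous_deriv le_rfl
  obtain ⟨w, hw, hE1⟩ := exists_mem_Adm_E1_pos (ρ' := fun x => deriv R (x 2))
    (ρ := fun x => R (x 2)) hΩo hg a p (by fun_prop) (by fun_prop)
    (fun x hx => hRpos x (subset_closure hx)) hx₀ hR' hH01
  refine ⟨_, max (E2 μ μ₀ Ω w) 1, hE1, by positivity, fun s hs => ?_⟩
  calc _ ≤ Efun g a μ μ₀ (fun x => deriv R (x 2)) (fun x => R (x 2)) p Ω s w := by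
        unfold Efun
        gcongr
        exact le_max_left _ _
    _ ≤ _ := le_csSup (hbdd s hs) ⟨w, hw, rfl⟩

/-- if `ρ̄ ∈ C¹(closure Ω)` with `inf ρ̄ > 0` and `ρ̄'(x₃⁰) > 0` somewhere
(`ρ̄` a function of `x₃` only), then there are `c₁, c₂ > 0` with `α(s) ≥ c₁ − s c₂` for
all `s > 0`; in particular `α(s) > 0` for all sufficiently small `s > 0`. -/
theorem alpha_lower_bound
    (Ω : Set E3) (hΩo : IsOpen Ω) (hΩb : Bornology.IsBounded Ω)
    (g a μ μ₀ : ℝ) (hg : 0 < g) (ha : 0 < a) (hμ : 0 < μ) (hμ₀ : 0 ≤ μ₀)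
    -- the density profile `ρ̄(x) = R(x₃)` depends only on the height `x₃`
    (R : ℝ → ℝ) (hR : ContDiff ℝ 1 R)
    (hRpos : ∀ x ∈ closure Ω, 0 < R (x 2))
    (x₀ : E3) (hx₀ : x₀ ∈ Ω) (hR' : 0 < deriv R (x₀ 2))
    (p : E3 → ℝ) (hpc : ContinuousOn p (closure Ω)) (hppos : ∀ x ∈ closure Ω, 0 < p x)
    (H01 : (E3 → Fin 3 → ℝ) → Prop)  -- membership in `H₀¹(Ω;ℝ³)`
    -- `H₀¹` contains all `C¹` fields compactly supported inside `Ω`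
    (hH01 : ∀ w : E3 → Fin 3 → ℝ, (∀ i : Fin 3, ContDiff ℝ 1 fun y => w y i) →
      closure {x | w x ≠ 0} ⊆ Ω → H01 w)
    (hbdd : ∀ s > (0:ℝ), BddAbove
      ((fun v => Efun g a μ μ₀ (fun x => deriv R (x 2)) (fun x => R (x 2)) p Ω s v) ''
        Adm H01 (fun x => R (x 2)) Ω)) :
    ∃ c₁ c₂ : ℝ, 0 < c₁ ∧ 0 < c₂ ∧
      ∀ s > (0:ℝ), c₁ - s * c₂ ≤
        alpha H01 g a μ μ₀ (fun x => deriv R (x 2)) (fun x => R (x 2)) p Ω s :=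
  alpha_lower_bound_general Ω hΩo g a μ μ₀ hg R hR hRpos x₀ hx₀ hR' p H01 hH01 hbdd
end
end

section
/- Let v₀ be a maximizer of E(·, s) over 𝒜 with Λ² := E(v₀, s) > 0, s > 0. If div(ρ̄ v₀) ≡ 0 on Ω and ρ̄' ≥ 0, then one reaches a contradiction: substituting ρ̄ div v₀ = −ρ̄' v₀₃ into E gives 0 < Λ² = −∫_Ω [ g ρ̄' v₀₃² + (1+a) p̄ |div v₀|² ] dx − s ∫_Ω ( μ|∇v₀|² + μ₀|div v₀|² ) dx < 0. Hence if ρ̄' ≥ 0, any maximizer with positive energy satisfies div(ρ̄ v₀) ≢ 0. -/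
open MeasureTheory Real
noncomputable section

/-- if `ρ̄' ≥ 0`, a maximizer `v₀` of `E(·,s)` with positive energy
`Λ² = E(v₀,s) > 0` cannot satisfy `div(ρ̄v₀) ≡ 0` on `Ω` (here
`div(ρ̄v₀) = ρ̄'v₀₃ + ρ̄ div v₀` since `ρ̄` depends only on `x₃`). -/
theorem maximizer_div_rho_v_ne_zero
    (Ω : Set E3) (hΩo : IsOpen Ω) (hΩb : Bornology.IsBounded Ω)
    (g a μ μ₀ s : ℝ) (hg : 0 < g) (ha : 0 < a) (hμ : 0 < μ) (hμ₀ : 0 ≤ μ₀) (hs : 0 < s)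
    -- `ρ̄(x) = R(x₃)` with `ρ̄' ≥ 0`
    (R : ℝ → ℝ) (hR : ContDiff ℝ 1 R) (hRpos : ∀ x ∈ closure Ω, 0 < R (x 2))
    (hR'nonneg : ∀ x ∈ Ω, 0 ≤ deriv R (x 2))
    (p : E3 → ℝ) (hpc : ContinuousOn p (closure Ω)) (hppos : ∀ x ∈ closure Ω, 0 < p x)
    (H01 : (E3 → Fin 3 → ℝ) → Prop)  -- membership in `H₀¹(Ω;ℝ³)`
    (v₀ : E3 → Fin 3 → ℝ) (hv₀ : v₀ ∈ Adm H01 (fun x => R (x 2)) Ω)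
    (hmax : ∀ v ∈ Adm H01 (fun x => R (x 2)) Ω,
      Efun g a μ μ₀ (fun x => deriv R (x 2)) (fun x => R (x 2)) p Ω s v ≤
        Efun g a μ μ₀ (fun x => deriv R (x 2)) (fun x => R (x 2)) p Ω s v₀)
    (Λ : ℝ) (hΛ : 0 < Λ)
    (hΛsq : Λ ^ 2 = Efun g a μ μ₀ (fun x => deriv R (x 2)) (fun x => R (x 2)) p Ω s v₀) :
    ¬ (∀ x ∈ Ω, deriv R (x 2) * v₀ x 2 + R (x 2) * div3 v₀ x = 0) := by
  intro hdiv
  have h1 : E1 g a (fun x => deriv R (x 2)) (fun x => R (x 2)) p Ω v₀ ≤ 0 := by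
    apply setIntegral_nonpos hΩo.measurableSet
    intro x hx
    have hd := hdiv x hx
    have hp := hppos x (subset_closure hx)
    have hr' := hR'nonneg x hx
    set d := div3 v₀ x with hdd
    set w := v₀ x 2 with hw
    have key : R (x 2) * d = -(deriv R (x 2) * w) := by linarith
    have key2 : 2 * g * (R (x 2) * d) * w = 2 * g * (-(deriv R (x 2) * w)) * w := by
      rw [key]
    nlinarith [mul_nonneg hr' (sq_nonneg w), mul_nonneg (mul_nonneg (by linarith : (0:ℝ) ≤ 1 + a) hp.le) (sq_nonneg d), mul_nonneg hg.le (mul_nonneg hr' (sq_nonneg w))]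
  have h2 : 0 ≤ E2 μ μ₀ Ω v₀ := by
    apply setIntegral_nonneg hΩo.measurableSet
    intro x _
    have hgr : 0 ≤ gradSq v₀ x :=
      Finset.sum_nonneg fun i _ => Finset.sum_nonneg fun j _ => sq_nonneg _
    have := sq_nonneg (div3 v₀ x)
    nlinarith
  have hle : Λ ^ 2 ≤ 0 := by
    rw [hΛsq]; unfold Efun; nlinarith
  nlinarith [pow_pos hΛ 2]
end
end

section
/- Let Ω ⊂ ℝ³ contain a point with vertical coordinate x₃⁰, and let ρ̄ ∈ C¹ with ρ̄ > 0, ρ̄'(x₃⁰) > 0, a > 0, g > 0, c₁ > 0. There is no function ē of the form ē(x₃) = c₁ (x₃ + C) for some constant C, with ē > 0 on Ω, satisfying the hydrostatic relation a(ρ̄ ē)'(x₃) = −g ρ̄(x₃) for all relevant x₃. Equivalently: a steady state (ρ̄, 0, ē) with Δē = 0 (ē affine in x₃), ē > 0, and ∇(a ρ̄ ē) = −ρ̄ g e₃ cannot exist when ρ̄'(x₃⁰) > 0. -/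
/-! At a height where `ρ̄` increases, both factors of the pressure `a ρ̄ ē` are positive and
increasing, so the pressure increases there, whereas the hydrostatic relation makes it decrease. -/

theorem deriv_mul_pos {f h : ℝ → ℝ} {y : ℝ} (hf : 0 < f y) (hh : 0 < h y)
    (hf' : 0 < deriv f y) (hh' : 0 < deriv h y) : 0 < deriv (fun z => f z * h z) y := by
  rw [deriv_fun_mul (differentiableAt_of_deriv_ne_zero hf'.ne')
    (differentiableAt_of_deriv_ne_zero hh'.ne')]
  positivity

theorem no_affine_steady_internal_energy_general
    (S : Set ℝ)  -- the set of heights `x₃` of points of `Ω`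
    (a g : ℝ) (ha : 0 < a) (hg : 0 < g)
    (R : ℝ → ℝ) (hRpos : ∀ y ∈ S, 0 < R y)
    (y₀ : ℝ) (hy₀ : y₀ ∈ S) (hR' : 0 < deriv R y₀) :
    ¬ ∃ c₁ C : ℝ, 0 < c₁ ∧ (∀ y ∈ S, 0 < c₁ * (y + C)) ∧
      (∀ y ∈ S, a * deriv (fun z => R z * (c₁ * (z + C))) y = -(g * R y)) := by
  rintro ⟨c₁, C, hc₁, hpos, heq⟩
  have hR₀ := hRpos y₀ hy₀
  have hpressure' : 0 < deriv (fun z => R z * (c₁ * (z + C))) y₀ :=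
    deriv_mul_pos hR₀ (hpos y₀ hy₀) hR' (by simpa using hc₁)
  linarith [heq y₀ hy₀, mul_pos ha hpressure', mul_pos hg hR₀]

/-- nonexistence of an affine steady internal energy. If `ρ̄ = R ∈ C¹`
is positive with `R'(x₃⁰) > 0` at some height `x₃⁰` of `Ω`, `a > 0`, `g > 0`, then there
is no `ē` of the form `ē(x₃) = c₁(x₃ + C)` with `c₁ > 0`, positive on the heights of
`Ω`, satisfying the hydrostatic relation `a(ρ̄ē)' = −gρ̄` there. -/
theorem no_affine_steady_internal_energy
    (S : Set ℝ)  -- the set of heights `x₃` of points of `Ω`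
    (a g : ℝ) (ha : 0 < a) (hg : 0 < g)
    (R : ℝ → ℝ) (hR : ContDiff ℝ 1 R) (hRpos : ∀ y ∈ S, 0 < R y)
    (y₀ : ℝ) (hy₀ : y₀ ∈ S) (hR' : 0 < deriv R y₀) :
    ¬ ∃ c₁ C : ℝ, 0 < c₁ ∧ (∀ y ∈ S, 0 < c₁ * (y + C)) ∧
      (∀ y ∈ S, a * deriv (fun z => R z * (c₁ * (z + C))) y = -(g * R y)) :=
  no_affine_steady_internal_energy_general S a g ha hg R hRpos y₀ hy₀ hR'
end

section
/- Define Λ_inc² = sup over divergence-free v ∈ H₀¹(Ω;ℝ³) with ∫ ρ̄|v|² = 1 of ( g∫ ρ̄' v₃² dx − Λ_inc μ ∫ |∇v|² dx ), and Λ² = sup over all v ∈ H₀¹(Ω;ℝ³) with ∫ ρ̄|v|² = 1 of ( E₁(v) − Λ E₂(v) ), where E₁(v) = ∫ ( g ρ̄' v₃² + (2g ρ̄ v₃ − (1+a)p̄ div v) div v ) dx and E₂(v) = ∫ ( μ|∇v|² + μ₀|div v|² ) dx. Assume Λ, Λ_inc > 0 are the unique fixed points of these relations. Then Λ ≥ Λ_inc.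 -/
open MeasureTheory Real
noncomputable section

/-- The incompressible energy `g∫ρ̄'v₃² − sμ∫|∇v|²`. -/
def EfunInc (g μ : ℝ) (ρ' : E3 → ℝ) (Ω : Set E3) (s : ℝ) (v : E3 → Fin 3 → ℝ) : ℝ :=
  (∫ x in Ω, g * ρ' x * (v x 2) ^ 2) - s * μ * ∫ x in Ω, gradSq v x

/-- The incompressible admissible set: divergence-free members of `𝒜`. -/
def AdmInc (H01 : (E3 → Fin 3 → ℝ) → Prop) (ρ : E3 → ℝ) (Ω : Set E3) :
    Set (E3 → Fin 3 → ℝ) :=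
  { v ∈ Adm H01 ρ Ω | ∀ x ∈ Ω, div3 v x = 0 }

/-- the compressibility has no stabilizing effect: the sharp growth rate
`Λ` of the compressible problem, defined by the fixed-point relation
`Λ² = sup_𝒜 (E₁ − ΛE₂)`, dominates the incompressible sharp growth rate `Λ_inc`
defined by `Λ_inc² = sup_{𝒜, div v = 0} (g∫ρ̄'v₃² − Λ_inc μ∫|∇v|²)`. -/
theorem compressible_growth_rate_ge_incompressible
    (Ω : Set E3) (hΩo : IsOpen Ω) (hΩb : Bornology.IsBounded Ω)
    (g a μ μ₀ : ℝ) (hg : 0 < g) (ha : 0 < a) (hμ : 0 < μ) (hμ₀ : 0 ≤ μ₀)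
    (ρ ρ' p : E3 → ℝ)
    (hρc : ContinuousOn ρ (closure Ω)) (hpc : ContinuousOn p (closure Ω))
    (hρpos : ∀ x ∈ closure Ω, 0 < ρ x) (hppos : ∀ x ∈ closure Ω, 0 < p x)
    (H01 : (E3 → Fin 3 → ℝ) → Prop)  -- membership in `H₀¹(Ω;ℝ³)`
    (hne_inc : (AdmInc H01 ρ Ω).Nonempty)
    (hbdd : ∀ s > (0:ℝ), BddAbove ((fun v => Efun g a μ μ₀ ρ' ρ p Ω s v) '' Adm H01 ρ Ω))
    (hbdd_inc : ∀ s > (0:ℝ),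
      BddAbove ((fun v => EfunInc g μ ρ' Ω s v) '' AdmInc H01 ρ Ω))
    -- for divergence-free fields on `Ω` the two energies coincide
    (hcoincide : ∀ s > (0:ℝ), ∀ v ∈ AdmInc H01 ρ Ω,
      EfunInc g μ ρ' Ω s v = Efun g a μ μ₀ ρ' ρ p Ω s v)
    (Λ Λinc : ℝ) (hΛ : 0 < Λ) (hΛinc : 0 < Λinc)
    -- the fixed-point characterizations of the two sharp growth rates
    (hfix : Λ ^ 2 = alpha H01 g a μ μ₀ ρ' ρ p Ω Λ)
    (hfix_inc : Λinc ^ 2 = sSup ((fun v => EfunInc g μ ρ' Ω Λinc v) '' AdmInc H01 ρ Ω))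
    -- the incompressible variational value is nonincreasing in `s`
    (hmono_inc : ∀ s₁ ∈ Set.Ioi (0:ℝ), ∀ s₂ ∈ Set.Ioi (0:ℝ), s₁ ≤ s₂ →
      sSup ((fun v => EfunInc g μ ρ' Ω s₂ v) '' AdmInc H01 ρ Ω) ≤
        sSup ((fun v => EfunInc g μ ρ' Ω s₁ v) '' AdmInc H01 ρ Ω)) :
    Λinc ≤ Λ := by
  by_contra h
  push_neg at h
  have hstep1 : sSup ((fun v => EfunInc g μ ρ' Ω Λinc v) '' AdmInc H01 ρ Ω) ≤
      sSup ((fun v => EfunInc g μ ρ' Ω Λ v) '' AdmInc H01 ρ Ω) :=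
    hmono_inc Λ hΛ Λinc hΛinc h.le
  have hstep2 : sSup ((fun v => EfunInc g μ ρ' Ω Λ v) '' AdmInc H01 ρ Ω) ≤
      alpha H01 g a μ μ₀ ρ' ρ p Ω Λ := by
    apply csSup_le (hne_inc.image _)
    rintro x ⟨v, hv, rfl⟩
    simp only []
    rw [hcoincide Λ hΛ v hv]
    exact le_csSup (hbdd Λ hΛ) ⟨v, hv.1, rfl⟩
  have : Λinc ^ 2 ≤ Λ ^ 2 := by
    rw [hfix, hfix_inc]; exact hstep1.trans hstep2
  have := pow_lt_pow_left₀ h hΛ.le (n := 2) (by norm_num)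
  linarith
end
end
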